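/- arXiv:2408.07939 — 3 statements merged into one kernel-verified Lean document; each statement's English description precedes it below -/
import Mathlib

section
/- For a Hurwitz matrix A (all eigenvalues have negative real part), the frequency-limited controllability Gramian P_ω = (1/2π) ∫_{-ω}^{ω} (jνI - A)^{-1} B Bᵀ (jνI - A)^{-*} dν satisfies the Lyapunov equation A P_ω + P_ω Aᵀ + F_ω B Bᵀ + B Bᵀ F_ω* = 0, where F_ω = (1/2π) ∫_{-ω}^{ω} (jνI - A)^{-1} dν. -/
/-!
Write `R ν = (iν - A)⁻¹`, which exists for every real `ν` because `A` has no eigenvalue on the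
imaginary axis. The resolvent identity `A R = iν R - 1` and its adjoint `Rᴴ Aᴴ = -iν Rᴴ - 1` give,
for `G = R B Bᴴ Rᴴ`, the pointwise identity `A G + G Aᴴ + R B Bᴴ + B Bᴴ Rᴴ = 0`: the `± iν G`
terms cancel. Integrating it over `[-ω, ω]`, which commutes with the constant matrix products and
with `ᴴ`, gives the Lyapunov equation.
-/

open Matrix

/-- The resolvMat `(jνI - A)⁻¹`. -/
noncomputable def resolvMat {n : ℕ} (A : Matrix (Fin n) (Fin n) ℂ) (ν : ℝ) :
    Matrix (Fin n) (Fin n) ℂ :=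
  ((Complex.I * (ν : ℂ)) • (1 : Matrix (Fin n) (Fin n) ℂ) - A)⁻¹

/-- Frequency-limited controllability Gramian
`P_ω = (1/2π) ∫_{-ω}^{ω} (jνI - A)⁻¹ B Bᴴ (jνI - A)⁻ᴴ dν` (entrywise integral). -/
noncomputable def Pfl {n m : ℕ} (A : Matrix (Fin n) (Fin n) ℂ)
    (B : Matrix (Fin n) (Fin m) ℂ) (ω : ℝ) : Matrix (Fin n) (Fin n) ℂ :=
  Matrix.of fun i j => (1 / (2 * (Real.pi : ℂ))) *
    ∫ ν in (-ω)..ω, (resolvMat A ν * B * Bᴴ * (resolvMat A ν)ᴴ) i j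

/-- `F_ω = (1/2π) ∫_{-ω}^{ω} (jνI - A)⁻¹ dν` (entrywise integral). -/
noncomputable def Ffl {n : ℕ} (A : Matrix (Fin n) (Fin n) ℂ) (ω : ℝ) :
    Matrix (Fin n) (Fin n) ℂ :=
  Matrix.of fun i j => (1 / (2 * (Real.pi : ℂ))) * ∫ ν in (-ω)..ω, resolvMat A ν i j

open MeasureTheory

theorem lyapunov_of_mul_eq_smul_sub_one {𝕜 R : Type*} [CommRing 𝕜] [StarRing 𝕜] [Ring R]
    [StarRing R] [Algebra 𝕜 R] [StarModule 𝕜 R] {s : 𝕜} (hs : star s = -s) {a x : R}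
    (hax : a * x = s • x - 1) (q : R) :
    a * (x * q * star x) + x * q * star x * star a + x * q + q * star x = 0 := by
  have hxa : star x * star a = -s • star x - 1 := by
    rw [← star_mul, hax, star_sub, star_smul, hs, star_one]
  calc a * (x * q * star x) + x * q * star x * star a + x * q + q * star x
      = (a * x) * q * star x + x * q * (star x * star a) + x * q + q * star x := by
        simp only [mul_assoc]
    _ = 0 := by
        rw [hax, hxa]
        simp only [sub_mul, mul_sub, smul_mul_assoc, mul_smul_comm, one_mul, mul_one, neg_smul,
          mul_neg]
        abel

theorem Continuous.matrix_inv {X n K : Type*} [TopologicalSpace X] [Fintype n] [DecidableEq n]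
    [Field K] [TopologicalSpace K] [IsTopologicalDivisionRing K]
    {M : X → Matrix n n K} (hM : Continuous M) (h : ∀ x, IsUnit (M x)) :
    Continuous fun x => (M x)⁻¹ :=
  continuous_iff_continuousAt.2 fun x => by
    refine (continuousAt_matrix_inv _ ?_).comp hM.continuousAt
    rw [Ring.inverse_eq_inv']
    exact continuousAt_inv₀ ((isUnit_iff_isUnit_det _).1 (h x)).ne_zero

section ResolvMat

variable {n : ℕ} {A : Matrix (Fin n) (Fin n) ℂ}

theorem isUnit_smul_one_sub_of_notMem_spectrum {z : ℂ} (hz : z ∉ spectrum ℂ A) :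
    IsUnit (z • (1 : Matrix (Fin n) (Fin n) ℂ) - A) := by
  simpa [Algebra.algebraMap_eq_smul_one] using spectrum.notMem_iff.1 hz

theorem mul_resolvMat {ν : ℝ} (hν : Complex.I * ν ∉ spectrum ℂ A) :
    A * resolvMat A ν = (Complex.I * ν) • resolvMat A ν - 1 := by
  have h := mul_nonsing_inv _ ((isUnit_iff_isUnit_det _).1 (isUnit_smul_one_sub_of_notMem_spectrum hν))
  calc A * resolvMat A ν
      = ((Complex.I * ν) • 1 - ((Complex.I * ν) • 1 - A)) * resolvMat A ν := by
        rw [sub_sub_cancel]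
    _ = (Complex.I * ν) • resolvMat A ν - 1 := by
        rw [sub_mul, smul_mul, one_mul, resolvMat, h]

theorem continuous_resolvMat (hA : ∀ ν : ℝ, Complex.I * ν ∉ spectrum ℂ A) :
    Continuous (resolvMat A) :=
  Continuous.matrix_inv (by fun_prop) fun ν => isUnit_smul_one_sub_of_notMem_spectrum (hA ν)

end ResolvMat

section MatrixIntegral

attribute [local instance] Matrix.normedAddCommGroup Matrix.normedSpace

-- Integrability is assumed as continuity: `IntervalIntegrable` would be elaborated with the
-- product topology on matrices, which is not reducibly the topology of the local norm.
variable {l m n 𝕜 : Type*} [Fintype l] [Fintype m] [Fintype n] [RCLike 𝕜] {a b : ℝ}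

theorem Matrix.intervalIntegral_apply {f : ℝ → Matrix m n 𝕜} (hf : Continuous f) (i : m)
    (j : n) : (∫ x in a..b, f x) i j = ∫ x in a..b, f x i j :=
  ((LinearMap.toContinuousLinearMap (entryLinearMap 𝕜 𝕜 i j)).intervalIntegral_comp_comm
    (hf.intervalIntegrable a b)).symm

theorem Matrix.intervalIntegral_mul_left {f : ℝ → Matrix m n 𝕜} (hf : Continuous f)
    (C : Matrix l m 𝕜) : ∫ x in a..b, C * f x = C * ∫ x in a..b, f x :=
  (LinearMap.toContinuousLinearMap (mulLeftLinearMap n 𝕜 C)).intervalIntegral_comp_comm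
    (hf.intervalIntegrable a b)

theorem Matrix.intervalIntegral_mul_right {f : ℝ → Matrix l m 𝕜} (hf : Continuous f)
    (C : Matrix m n 𝕜) : ∫ x in a..b, f x * C = (∫ x in a..b, f x) * C :=
  (LinearMap.toContinuousLinearMap (mulRightLinearMap l 𝕜 C)).intervalIntegral_comp_comm
    (hf.intervalIntegrable a b)

theorem Matrix.intervalIntegral_conjTranspose {f : ℝ → Matrix m n 𝕜} (hf : Continuous f) :
    ∫ x in a..b, (f x)ᴴ = (∫ x in a..b, f x)ᴴ :=
  ((conjTransposeAddEquiv m n 𝕜).toAddMonoidHom.toRealLinearMap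
    continuous_id.matrix_conjTranspose).intervalIntegral_comp_comm (hf.intervalIntegrable a b)

variable {n m : ℕ} {A : Matrix (Fin n) (Fin n) ℂ}

theorem Pfl_eq_smul_intervalIntegral (hR : Continuous (resolvMat A))
    (B : Matrix (Fin n) (Fin m) ℂ) (ω : ℝ) :
    Pfl A B ω = (1 / (2 * (Real.pi : ℂ))) •
      ∫ ν in (-ω)..ω, resolvMat A ν * (B * Bᴴ) * (resolvMat A ν)ᴴ := by
  ext i j
  rw [Matrix.smul_apply, Matrix.intervalIntegral_apply (by fun_prop)]
  simp [Pfl, Matrix.mul_assoc]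

theorem Ffl_eq_smul_intervalIntegral (hR : Continuous (resolvMat A)) (ω : ℝ) :
    Ffl A ω = (1 / (2 * (Real.pi : ℂ))) • ∫ ν in (-ω)..ω, resolvMat A ν := by
  ext i j
  rw [Matrix.smul_apply, Matrix.intervalIntegral_apply hR]
  rfl

theorem Pfl_lyapunov (hA : ∀ ν : ℝ, Complex.I * ν ∉ spectrum ℂ A)
    (B : Matrix (Fin n) (Fin m) ℂ) (ω : ℝ) :
    A * Pfl A B ω + Pfl A B ω * Aᴴ + Ffl A ω * (B * Bᴴ) + B * Bᴴ * (Ffl A ω)ᴴ = 0 := by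
  have hR := continuous_resolvMat hA
  have hG : Continuous fun ν => resolvMat A ν * (B * Bᴴ) * (resolvMat A ν)ᴴ := by fun_prop
  have hc : star (1 / (2 * (Real.pi : ℂ))) = 1 / (2 * (Real.pi : ℂ)) := by
    simp [Complex.conj_ofReal]
  have hpointwise (ν : ℝ) : A * (resolvMat A ν * (B * Bᴴ) * (resolvMat A ν)ᴴ)
      + resolvMat A ν * (B * Bᴴ) * (resolvMat A ν)ᴴ * Aᴴ + resolvMat A ν * (B * Bᴴ)
      + B * Bᴴ * (resolvMat A ν)ᴴ = 0 :=
    lyapunov_of_mul_eq_smul_sub_one (by simp [Complex.conj_ofReal]) (mul_resolvMat (hA ν)) _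
  rw [Pfl_eq_smul_intervalIntegral hR, Ffl_eq_smul_intervalIntegral hR, conjTranspose_smul, hc,
    Matrix.mul_smul, Matrix.smul_mul, Matrix.smul_mul, Matrix.mul_smul, ← smul_add, ← smul_add,
    ← smul_add, ← Matrix.intervalIntegral_mul_left hG, ← Matrix.intervalIntegral_mul_right hG,
    ← Matrix.intervalIntegral_mul_right hR, ← Matrix.intervalIntegral_conjTranspose hR,
    ← Matrix.intervalIntegral_mul_left (by fun_prop),
    ← intervalIntegral.integral_add, ← intervalIntegral.integral_add,
    ← intervalIntegral.integral_add]
  · simp only [hpointwise, intervalIntegral.integral_zero, smul_zero]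
  all_goals exact (by fun_prop : Continuous _).intervalIntegrable _ _

end MatrixIntegral

theorem flimited_ctrb_gramian_lyapunov_general
    {n m : ℕ} (A : Matrix (Fin n) (Fin n) ℝ) (B : Matrix (Fin n) (Fin m) ℝ)
    (hA : ∀ μ ∈ spectrum ℂ (A.map Complex.ofReal), μ.re < 0)
    (ω : ℝ) :
    A.map Complex.ofReal * Pfl (A.map Complex.ofReal) (B.map Complex.ofReal) ω
      + Pfl (A.map Complex.ofReal) (B.map Complex.ofReal) ω * (A.map Complex.ofReal)ᵀ
      + Ffl (A.map Complex.ofReal) ω * (B.map Complex.ofReal * (B.map Complex.ofReal)ᵀ)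
      + B.map Complex.ofReal * (B.map Complex.ofReal)ᵀ * (Ffl (A.map Complex.ofReal) ω)ᴴ
      = 0 := by
  have hT {p q : ℕ} (M : Matrix (Fin p) (Fin q) ℝ) :
      (M.map Complex.ofReal)ᵀ = (M.map Complex.ofReal)ᴴ := by
    ext i j
    simp
  rw [hT, hT]
  exact Pfl_lyapunov (fun ν hν => by simpa using hA _ hν) _ ω

/-- for a Hurwitz real matrix `A`, the frequency-limited controllability
Gramian satisfies the Lyapunov equation `A P_ω + P_ω Aᵀ + F_ω B Bᵀ + B Bᵀ F_ω* = 0`. -/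
theorem flimited_ctrb_gramian_lyapunov
    {n m : ℕ} (A : Matrix (Fin n) (Fin n) ℝ) (B : Matrix (Fin n) (Fin m) ℝ)
    (hA : ∀ μ ∈ spectrum ℂ (A.map Complex.ofReal), μ.re < 0)
    (ω : ℝ) (hω : 0 < ω) :
    A.map Complex.ofReal * Pfl (A.map Complex.ofReal) (B.map Complex.ofReal) ω
      + Pfl (A.map Complex.ofReal) (B.map Complex.ofReal) ω * (A.map Complex.ofReal)ᵀ
      + Ffl (A.map Complex.ofReal) ω * (B.map Complex.ofReal * (B.map Complex.ofReal)ᵀ)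
      + B.map Complex.ofReal * (B.map Complex.ofReal)ᵀ * (Ffl (A.map Complex.ofReal) ω)ᴴ
      = 0 :=
  flimited_ctrb_gramian_lyapunov_general A B hA ω
end

section
/- Suppose P_{12,ω} solves A P_{12,ω} + P_{12,ω} A_kᵀ + F_ω B B_kᵀ + B B_kᵀ F_{k,ω}* = 0 and P_{k,ω} solves A_k P_{k,ω} + P_{k,ω} A_kᵀ + F_{k,ω} B_k B_kᵀ + B_k B_kᵀ F_{k,ω}* = 0, the latter having a unique solution. If W_k* V_k = I, V_k = P_{12,ω}, A_k = W_k* A V_k, B_k = W_k* B, and W_k* F_ω B = F_{k,ω} B_k, then P_{k,ω} = I. -/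
open Matrix

/-- If `P₁₂ω` and `P_kω` solve the stated frequency-limited Sylvester/Lyapunov
equations (the latter uniquely), and the Petrov–Galerkin data satisfy `Wₖ* Vₖ = I`,
`Vₖ = P₁₂ω`, `Aₖ = Wₖ* A Vₖ`, `Bₖ = Wₖ* B`, and `Wₖ* Fω B = F_kω Bₖ`, then `P_kω = I`. -/
theorem flimited_gramian_identity
    {n k m : ℕ}
    (A : Matrix (Fin n) (Fin n) ℂ) (Ak : Matrix (Fin k) (Fin k) ℂ)
    (B : Matrix (Fin n) (Fin m) ℂ) (Bk : Matrix (Fin k) (Fin m) ℂ)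
    (Vk Wk : Matrix (Fin n) (Fin k) ℂ)
    (Fω : Matrix (Fin n) (Fin n) ℂ) (Fkω : Matrix (Fin k) (Fin k) ℂ)
    (P12ω : Matrix (Fin n) (Fin k) ℂ) (Pkω : Matrix (Fin k) (Fin k) ℂ)
    (hA : ∀ μ ∈ spectrum ℂ A, μ.re < 0)
    (hAk : ∀ μ ∈ spectrum ℂ Ak, μ.re < 0)
    (h12 : A * P12ω + P12ω * Akᵀ + Fω * B * Bkᵀ + B * Bkᵀ * Fkωᴴ = 0)
    (hk : Ak * Pkω + Pkω * Akᵀ + Fkω * Bk * Bkᵀ + Bk * Bkᵀ * Fkωᴴ = 0)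
    (huniq : ∀ X : Matrix (Fin k) (Fin k) ℂ,
      Ak * X + X * Akᵀ + Fkω * Bk * Bkᵀ + Bk * Bkᵀ * Fkωᴴ = 0 → X = Pkω)
    (hWV : Wkᴴ * Vk = 1) (hV : Vk = P12ω)
    (hAk' : Ak = Wkᴴ * A * Vk) (hBk : Bk = Wkᴴ * B)
    (hF : Wkᴴ * (Fω * B) = Fkω * Bk) :
    Pkω = 1 := by
  refine (huniq 1 ?_).symm
  have h := congrArg (fun M => Wkᴴ * M) h12
  simp only [Matrix.mul_add, Matrix.mul_zero] at h
  subst hV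
  rw [← Matrix.mul_assoc Wkᴴ A, ← hAk'] at h
  rw [← Matrix.mul_assoc Wkᴴ Vk Akᵀ, hWV, Matrix.one_mul] at h
  rw [← Matrix.mul_assoc Wkᴴ (Fω * B) Bkᵀ, hF] at h
  rw [show Wkᴴ * (B * Bkᵀ * Fkωᴴ) = Wkᴴ * B * Bkᵀ * Fkωᴴ by
        rw [Matrix.mul_assoc B, ← Matrix.mul_assoc, ← Matrix.mul_assoc], ← hBk] at h
  rw [Matrix.mul_one, Matrix.one_mul]
  exact h
end

section
/- For the block triangular matrices 𝒜 = [[A, BC_v],[0, A_v]] and 𝒜̂ = [[A_k, B_kC_v],[0, A_v]] with ℬ = [0; B_v] and ℬ̂ = [0; B_v], the (1,1) block 𝒫_{12,ω} of the solution of 𝒜X + X𝒜̂ᵀ + ℬℬ̂ᵀ = 0 satisfies A𝒫_{12,ω} + 𝒫_{12,ω}A_kᵀ + P̂_vC_vᵀB_kᵀ + BC_vP̂_{k,v}ᵀ = 0, where P̂_v solves AP̂_v + P̂_vA_vᵀ + BC_vP_v = 0, P̂_{k,v} solves A_kP̂_{k,v} + P̂_{k,v}A_vᵀ + B_kC_vP_v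 = 0, and P_v solves A_vP_v + P_vA_vᵀ + B_vB_vᵀ = 0. -/
/-!
Writing `X` in blocks, the Sylvester equation for `X` splits into four equations. The `(2,2)`,
`(1,2)` and transposed `(2,1)` blocks satisfy the equations defining `P_v`, `P̂_v` and `P̂_{k,v}`,
so they coincide with them: a Sylvester equation `M Y + Y Nᵀ + C = 0` with `M`, `N` Hurwitz has at
most one solution, because `M` and `-Nᵀ` have disjoint spectra. Substituting into the `(1,1)` block
equation gives the claim.
-/

open Matrix

/-- A real matrix is Hurwitz if all its (complex) eigenvalues have negative real part. -/
def IsHurwitzR {n : ℕ} (A : Matrix (Fin n) (Fin n) ℝ) : Prop :=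
  ∀ μ ∈ spectrum ℂ (A.map Complex.ofReal), μ.re < 0

/-- The padded input matrix `[0; B_v]`. -/
def padBot {n q m : ℕ} (Bv : Matrix (Fin q) (Fin m) ℝ) : Matrix (Fin n ⊕ Fin q) (Fin m) ℝ :=
  Matrix.of (Sum.elim (fun _ => (0 : Fin m → ℝ)) (fun i => Bv i))

open Polynomial

namespace Matrix

section

variable {R ι κ : Type*} [CommSemiring R] [Fintype ι] [DecidableEq ι] [Fintype κ] [DecidableEq κ]

theorem aeval_mul_eq_mul_aeval {M : Matrix ι ι R} {N : Matrix κ κ R} {Y : Matrix ι κ R}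
    (hY : M * Y = Y * N) (p : R[X]) : aeval M p * Y = Y * aeval N p := by
  have hpow : ∀ j : ℕ, M ^ j * Y = Y * N ^ j := by
    intro j
    induction j with
    | zero => simp
    | succ j ih =>
      rw [pow_succ', pow_succ', Matrix.mul_assoc, ih, ← Matrix.mul_assoc, hY, Matrix.mul_assoc]
  induction p using Polynomial.induction_on' with
  | add p q hp hq => rw [map_add, map_add, Matrix.add_mul, Matrix.mul_add, hp, hq]
  | monomial j c => simp [aeval_monomial, Algebra.algebraMap_eq_smul_one, hpow j]

end

variable {K ι κ : Type*} [Field K] [Fintype ι] [DecidableEq ι] [Fintype κ] [DecidableEq κ]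

theorem spectrum_transpose (N : Matrix κ κ K) : spectrum K Nᵀ = spectrum K N := by
  ext μ
  simp only [mem_spectrum_iff_isRoot_charpoly, charpoly_transpose]

theorem eq_zero_of_mul_eq_mul_of_disjoint_spectrum [IsAlgClosed K]
    {M : Matrix ι ι K} {N : Matrix κ κ K} {Y : Matrix ι κ K}
    (hMN : Disjoint (spectrum K M) (spectrum K N)) (hY : M * Y = Y * N) : Y = 0 := by
  cases isEmpty_or_nonempty ι
  · exact Subsingleton.elim _ _
  -- `χ_M(N)` is invertible by the spectral mapping theorem, and `Y χ_M(N) = χ_M(M) Y = 0`.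
  have hunit : IsUnit (aeval N M.charpoly) := by
    rw [← spectrum.zero_notMem_iff K, spectrum.map_polynomial_aeval_of_degree_pos]
    · rintro ⟨μ, hμN, hμ⟩
      exact hMN.ne_of_mem (mem_spectrum_of_isRoot_charpoly hμ) hμN rfl
    · rw [charpoly_degree_eq_dim]
      exact_mod_cast Fintype.card_pos
  have hzero : Y * aeval N M.charpoly = 0 := by
    rw [← aeval_mul_eq_mul_aeval hY, aeval_self_charpoly, Matrix.zero_mul]
  calc Y = Y * aeval N M.charpoly * (aeval N M.charpoly)⁻¹ :=
        (mul_nonsing_inv_cancel_right _ Y ((isUnit_iff_isUnit_det _).mp hunit)).symm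
    _ = 0 := by rw [hzero, Matrix.zero_mul]

end Matrix

namespace IsHurwitzR

variable {a b : ℕ} {M : Matrix (Fin a) (Fin a) ℝ} {N : Matrix (Fin b) (Fin b) ℝ}

theorem eq_zero_of_sylvester (hM : IsHurwitzR M) (hN : IsHurwitzR N)
    {Y : Matrix (Fin a) (Fin b) ℝ} (hY : M * Y + Y * Nᵀ = 0) : Y = 0 := by
  let f : ℝ →+* ℂ := Complex.ofRealHom
  have hYc : M.map f * Y.map f = Y.map f * -(N.map f)ᵀ := by
    rw [Matrix.mul_neg, ← transpose_map, ← Matrix.map_mul, ← Matrix.map_mul,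
      eq_neg_iff_add_eq_zero, ← Matrix.map_add _ (map_add f), hY, Matrix.map_zero _ (map_zero f)]
  have hdisj : Disjoint (spectrum ℂ (M.map f)) (spectrum ℂ (-(N.map f)ᵀ)) := by
    rw [← spectrum.neg_eq, spectrum_transpose, Set.disjoint_left]
    intro μ hμM hμN
    have hμ : μ.re < 0 := hM μ hμM
    have hnegμ : (-μ).re < 0 := hN (-μ) hμN
    rw [Complex.neg_re] at hnegμ
    linarith
  exact Matrix.map_injective Complex.ofReal_injective
    (eq_zero_of_mul_eq_mul_of_disjoint_spectrum hdisj hYc)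

theorem eq_of_sylvester (hM : IsHurwitzR M) (hN : IsHurwitzR N) {C P Q : Matrix (Fin a) (Fin b) ℝ}
    (hP : M * P + P * Nᵀ + C = 0) (hQ : M * Q + Q * Nᵀ + C = 0) : P = Q := by
  refine sub_eq_zero.mp (hM.eq_zero_of_sylvester hN ?_)
  rw [Matrix.mul_sub, Matrix.sub_mul, ← sub_eq_zero.mpr (hP.trans hQ.symm)]
  abel

theorem isSymm_of_lyapunov (hM : IsHurwitzR M) {C P : Matrix (Fin a) (Fin a) ℝ} (hC : C.IsSymm)
    (hP : M * P + P * Mᵀ + C = 0) : P.IsSymm := by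
  refine hM.eq_of_sylvester hM ?_ hP
  rw [← hC.eq, ← transpose_transpose M, ← transpose_mul, ← transpose_mul, transpose_transpose,
    ← transpose_add, ← transpose_add, add_comm (P * Mᵀ), hP, transpose_zero]

end IsHurwitzR

theorem padBot_mul_padBot_transpose {n k q m : ℕ} (Bv : Matrix (Fin q) (Fin m) ℝ) :
    (padBot Bv : Matrix (Fin n ⊕ Fin q) (Fin m) ℝ)
      * (padBot Bv : Matrix (Fin k ⊕ Fin q) (Fin m) ℝ)ᵀ
    = fromBlocks 0 0 0 (Bv * Bvᵀ) := by
  ext (i | i) (j | j) <;> simp [padBot, mul_apply, fromBlocks]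

/-- for the block triangular matrices `𝒜 = [[A, BC_v],[0, A_v]]`,
`𝒜̂ = [[A_k, B_kC_v],[0, A_v]]` and `ℬ = ℬ̂ = [0; B_v]`, the (1,1) block `𝒫₁₂ω` of the
solution of `𝒜X + X𝒜̂ᵀ + ℬℬ̂ᵀ = 0` satisfies
`A 𝒫₁₂ω + 𝒫₁₂ω A_kᵀ + P̂_v C_vᵀ B_kᵀ + B C_v P̂_{k,v}ᵀ = 0`. -/
theorem filter_realization_cross_gramian
    {n k q m : ℕ}
    (A : Matrix (Fin n) (Fin n) ℝ) (Ak : Matrix (Fin k) (Fin k) ℝ)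
    (Av : Matrix (Fin q) (Fin q) ℝ)
    (B : Matrix (Fin n) (Fin m) ℝ) (Bk : Matrix (Fin k) (Fin m) ℝ)
    (Bv : Matrix (Fin q) (Fin m) ℝ) (Cv : Matrix (Fin m) (Fin q) ℝ)
    (hA : IsHurwitzR A) (hAk : IsHurwitzR Ak) (hAv : IsHurwitzR Av)
    (Pv : Matrix (Fin q) (Fin q) ℝ)
    (hPv : Av * Pv + Pv * Avᵀ + Bv * Bvᵀ = 0)
    (Phv : Matrix (Fin n) (Fin q) ℝ)
    (hPhv : A * Phv + Phv * Avᵀ + B * Cv * Pv = 0)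
    (Phkv : Matrix (Fin k) (Fin q) ℝ)
    (hPhkv : Ak * Phkv + Phkv * Avᵀ + Bk * Cv * Pv = 0)
    (X : Matrix (Fin n ⊕ Fin q) (Fin k ⊕ Fin q) ℝ)
    (hX : Matrix.fromBlocks A (B * Cv) 0 Av * X
        + X * (Matrix.fromBlocks Ak (Bk * Cv) 0 Av)ᵀ
        + padBot Bv * (padBot Bv : Matrix (Fin k ⊕ Fin q) (Fin m) ℝ)ᵀ = 0) :
    A * X.toBlocks₁₁ + X.toBlocks₁₁ * Akᵀ + Phv * Cvᵀ * Bkᵀ + B * Cv * Phkvᵀ = 0 := by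
  rw [← fromBlocks_toBlocks X, fromBlocks_transpose, fromBlocks_multiply, fromBlocks_multiply,
    padBot_mul_padBot_transpose, fromBlocks_add, fromBlocks_add, ← fromBlocks_zero,
    fromBlocks_inj] at hX
  obtain ⟨e11, e12, e21, e22⟩ := hX
  simp only [Matrix.zero_mul, Matrix.mul_zero, transpose_zero, add_zero, zero_add]
    at e11 e12 e21 e22
  have hPv_symm : Pv.IsSymm :=
    hAv.isSymm_of_lyapunov ((transpose_mul _ _).trans (by rw [transpose_transpose])) hPv
  have hX22 : X.toBlocks₂₂ = Pv := hAv.eq_of_sylvester hAv e22 hPv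
  have hX12 : X.toBlocks₁₂ = Phv := by
    refine hA.eq_of_sylvester hAv ?_ hPhv
    rw [← e12, hX22]
    abel
  have hX21 : X.toBlocks₂₁ᵀ = Phkv := by
    refine hAk.eq_of_sylvester hAv ?_ hPhkv
    rw [← transpose_transpose (Bk * Cv * Pv), ← hPv_symm.eq, ← hX22, ← transpose_zero, ← e21]
    simp only [transpose_add, transpose_mul, transpose_transpose]
    abel
  rw [← e11, hX12, ← hX21, transpose_transpose, transpose_mul, ← Matrix.mul_assoc]
  abel
end
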